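/- arXiv:1012.3474 — 3 statements merged into one kernel-verified Lean document; each statement's English description precedes it below -/
import Mathlib

section
/- If {A_i} satisfies ∑_i A_i† A_i = I and ∑_i ‖A_i‖_∞² = 1, then each A_i is a scalar multiple of a unitary: A_i = ‖A_i‖_∞ U_i with U_i unitary (assuming A_i ≠ 0). -/
/-! Applying `∑ Aᵢᴴ Aᵢ = 1` to a vector `x` gives `∑ ‖Aᵢ x‖² = ‖x‖²`, while termwise
`‖Aᵢ x‖² ≤ ‖Aᵢ‖² ‖x‖²` and the bounds sum to `‖x‖²` because `∑ ‖Aᵢ‖² = 1`. So every bound is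
attained: `Aᵢ` scales all vectors by exactly `‖Aᵢ‖`, hence `Aᵢ / ‖Aᵢ‖` is an isometry of a
finite-dimensional space, i.e. a unitary (and `Aᵢ = 0` if `‖Aᵢ‖ = 0`). -/

open scoped Matrix.Norms.L2Operator
open Matrix

namespace ContinuousLinearMap

variable {𝕜 E F ι : Type*} [RCLike 𝕜]
  [NormedAddCommGroup E] [InnerProductSpace 𝕜 E] [CompleteSpace E]
  [NormedAddCommGroup F] [InnerProductSpace 𝕜 F] [CompleteSpace F]
  {s : Finset ι} {T : ι → E →L[𝕜] F}

theorem sum_norm_sq_apply_of_sum_adjoint_comp_self_eq_one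
    (hT : ∑ j ∈ s, adjoint (T j) ∘L T j = 1) (x : E) :
    ∑ j ∈ s, ‖T j x‖ ^ 2 = ‖x‖ ^ 2 := by
  simp_rw [apply_norm_sq_eq_inner_adjoint_left, ← map_sum, ← sum_inner]
  rw [← _root_.sum_apply, hT, one_apply_eq_self, inner_self_eq_norm_sq]

theorem norm_apply_eq_opNorm_mul_of_sum_adjoint_comp_self_eq_one
    (hT : ∑ j ∈ s, adjoint (T j) ∘L T j = 1) (hsum : ∑ j ∈ s, ‖T j‖ ^ 2 = 1)
    {i : ι} (hi : i ∈ s) (x : E) :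
    ‖T i x‖ = ‖T i‖ * ‖x‖ := by
  have hle : ∀ j ∈ s, ‖T j x‖ ^ 2 ≤ (‖T j‖ * ‖x‖) ^ 2 := fun j _ =>
    pow_le_pow_left₀ (norm_nonneg _) ((T j).le_opNorm x) 2
  have heq : ∑ j ∈ s, ‖T j x‖ ^ 2 = ∑ j ∈ s, (‖T j‖ * ‖x‖) ^ 2 := by
    simp_rw [sum_norm_sq_apply_of_sum_adjoint_comp_self_eq_one hT, mul_pow, ← Finset.sum_mul,
      hsum, one_mul]
  exact (pow_left_inj₀ (norm_nonneg _) (by positivity) two_ne_zero).mp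
    ((Finset.sum_eq_sum_iff_of_le hle).mp heq i hi)

end ContinuousLinearMap

namespace Matrix

variable {𝕜 n : Type*} [RCLike 𝕜] [Fintype n] [DecidableEq n]

theorem exists_mem_unitaryGroup_smul_eq_of_norm_toEuclideanCLM_apply
    {A : Matrix n n 𝕜} {c : ℝ} (hc : 0 ≤ c)
    (hA : ∀ x, ‖toEuclideanCLM (n := n) (𝕜 := 𝕜) A x‖ = c * ‖x‖) :
    ∃ U ∈ unitaryGroup n 𝕜, A = (c : 𝕜) • U := by
  rcases hc.eq_or_lt with rfl | hc
  · refine ⟨1, one_mem _, ?_⟩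
    have h0 : toEuclideanCLM (n := n) (𝕜 := 𝕜) A = 0 := by
      ext1 x
      simpa using hA x
    simpa using h0
  refine ⟨(c⁻¹ : 𝕜) • A, ?_, ?_⟩
  · rw [mem_unitaryGroup_iff']
    apply EquivLike.injective (toEuclideanCLM (n := n) (𝕜 := 𝕜))
    rw [map_mul, map_star, map_one, ContinuousLinearMap.star_eq_adjoint,
      ContinuousLinearMap.mul_def, ← ContinuousLinearMap.norm_map_iff_adjoint_comp_self]
    intro x
    rw [map_smul, _root_.smul_apply, norm_smul, hA, norm_inv, RCLike.norm_ofReal,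
      abs_of_pos hc, inv_mul_cancel_left₀ hc.ne']
  · rw [smul_smul, ← RCLike.ofReal_inv, ← RCLike.ofReal_mul, mul_inv_cancel₀ hc.ne',
      RCLike.ofReal_one, one_smul]

end Matrix

theorem kraus_sum_sq_opNorm_eq_one_imp_random_unitary_general
    (d n : ℕ) (A : Fin n → Matrix (Fin d) (Fin d) ℂ)
    (hKraus : ∑ i, (A i)ᴴ * A i = 1)
    (hsum : ∑ i, ‖A i‖ ^ 2 = 1) :
    ∀ i, ∃ U ∈ Matrix.unitaryGroup (Fin d) ℂ, A i = (‖A i‖ : ℂ) • U := by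
  intro i
  have hT : ∑ j, ContinuousLinearMap.adjoint (toEuclideanCLM (n := Fin d) (𝕜 := ℂ) (A j)) ∘L
      toEuclideanCLM (n := Fin d) (𝕜 := ℂ) (A j) = 1 := by
    simpa [← star_eq_conjTranspose, map_star, ← ContinuousLinearMap.star_eq_adjoint,
      ← ContinuousLinearMap.mul_def] using congrArg (toEuclideanCLM (n := Fin d) (𝕜 := ℂ)) hKraus
  -- `hsum` applies as is: the L2 operator norm of `A j` is defeq to `‖toEuclideanCLM (A j)‖`.
  exact exists_mem_unitaryGroup_smul_eq_of_norm_toEuclideanCLM_apply (norm_nonneg _)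
    (ContinuousLinearMap.norm_apply_eq_opNorm_mul_of_sum_adjoint_comp_self_eq_one hT hsum
      (Finset.mem_univ i))

/-- If `∑ i (A i)ᴴ A i = 1` and `∑ i ‖A i‖² = 1`, then each nonzero `A i` is a scalar
multiple of a unitary: `A i = ‖A i‖ • U i` with `U i` unitary. -/
theorem kraus_sum_sq_opNorm_eq_one_imp_random_unitary
    (d n : ℕ) (A : Fin n → Matrix (Fin d) (Fin d) ℂ)
    (hKraus : ∑ i, (A i)ᴴ * A i = 1)
    (hsum : ∑ i, ‖A i‖ ^ 2 = 1)
    (hA : ∀ i, A i ≠ 0) :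
    ∀ i, ∃ U ∈ Matrix.unitaryGroup (Fin d) ℂ, A i = (‖A i‖ : ℂ) • U :=
  kraus_sum_sq_opNorm_eq_one_imp_random_unitary_general d n A hKraus hsum
end

section
/- For any two-qubit quantum state ρ, (1/2)(1 − √(1 − C^∩(ρ)²)) ≤ E_G^∩(ρ) ≤ C^∩(ρ)/2, where C^∩(ρ) = max over pure-state ensembles {p_i, ψ_i} of ρ of ∑_i p_i C(ψ_i) and E_G^∩(ρ) = max over pure-state ensembles of ∑_i p_i E_G(ψ_i). -/
/-!
Write a two-qubit vector `ψ` as its coefficient matrix `M`, so that `‖M‖_F = 1` and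
`C(ψ) = 2 |det M|`. The squared overlap of `ψ` with a product state `α ⊗ β` is at most
`‖M β̄‖²`, with equality for the right `α`, so the maximal overlap is the largest eigenvalue of
`Mᴴ M`: the larger root `(1 + √(1 - C²)) / 2` of `λ² - λ + |det M|²`. Hence
`E_G(ψ) = g (C ψ)` with `g c = (1 - √(1 - c²)) / 2`, a continuous function, convex on
`[-1, 1]`, with `g c ≤ c / 2` for `c ≥ 0`. Averaging the last inequality over an ensemble gives
the upper bound. For the lower bound, Jensen's inequality gives
`g (∑ pᵢ C(ψᵢ)) ≤ ∑ pᵢ E_G(ψᵢ) ≤ E_G^∩(ρ)` for every ensemble, and by continuity `g` passes to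
the supremum.
-/

open scoped ComplexOrder

/-- The Pauli matrix `σ_y`. -/
noncomputable def sigmaY : Matrix (Fin 2) (Fin 2) ℂ := !![0, -Complex.I; Complex.I, 0]

/-- The spin-flipped vector `|ψ̃⟩ = (σ_y ⊗ σ_y)|ψ*⟩`. -/
noncomputable def psiTilde (ψ : Fin 2 × Fin 2 → ℂ) : Fin 2 × Fin 2 → ℂ :=
  fun p => ∑ k, ∑ l, sigmaY p.1 k * sigmaY p.2 l * star (ψ (k, l))

/-- The concurrence `C(ψ) = |⟨ψ̃|ψ⟩|` of a two-qubit pure state. -/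
noncomputable def concurrence (ψ : Fin 2 × Fin 2 → ℂ) : ℝ :=
  ‖∑ p : Fin 2 × Fin 2, star (psiTilde ψ p) * ψ p‖

/-- The maximal squared overlap of a bipartite vector with product unit vectors. -/
noncomputable def maxOverlap (d : ℕ) (ψ : Fin d × Fin d → ℂ) : ℝ :=
  sSup {r : ℝ | ∃ α β : Fin d → ℂ, (∑ i, ‖α i‖ ^ 2) = 1 ∧ (∑ j, ‖β j‖ ^ 2) = 1 ∧
    r = ‖∑ p : Fin d × Fin d, star (α p.1 * β p.2) * ψ p‖ ^ 2}

/-- The geometric measure of entanglement of a two-qubit pure state. -/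
noncomputable def geomMeasure (ψ : Fin 2 × Fin 2 → ℂ) : ℝ := 1 - maxOverlap 2 ψ

/-- `IsEnsemble ρ p ψ`: `{p i, ψ i}` is a pure-state ensemble decomposition of `ρ`. -/
def IsEnsemble {n : ℕ} (ρ : Matrix (Fin 2 × Fin 2) (Fin 2 × Fin 2) ℂ)
    (p : Fin n → ℝ) (ψ : Fin n → (Fin 2 × Fin 2 → ℂ)) : Prop :=
  (∀ i, 0 ≤ p i) ∧ (∀ i, (∑ q : Fin 2 × Fin 2, ‖ψ i q‖ ^ 2) = 1) ∧
  (∀ q q', ρ q q' = ∑ i, (p i : ℂ) * (ψ i q * star (ψ i q')))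

/-- The concave-roof extension of the concurrence to two-qubit mixed states. -/
noncomputable def concCap (ρ : Matrix (Fin 2 × Fin 2) (Fin 2 × Fin 2) ℂ) : ℝ :=
  sSup {c : ℝ | ∃ (n : ℕ) (p : Fin n → ℝ) (ψ : Fin n → (Fin 2 × Fin 2 → ℂ)),
    IsEnsemble ρ p ψ ∧ c = ∑ i, p i * concurrence (ψ i)}

/-- The concave-roof extension of the geometric measure of entanglement. -/
noncomputable def geomCap (ρ : Matrix (Fin 2 × Fin 2) (Fin 2 × Fin 2) ℂ) : ℝ :=
  sSup {c : ℝ | ∃ (n : ℕ) (p : Fin n → ℝ) (ψ : Fin n → (Fin 2 × Fin 2 → ℂ)),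
    IsEnsemble ρ p ψ ∧ c = ∑ i, p i * geomMeasure (ψ i)}

open scoped ComplexConjugate Matrix
open Set

noncomputable def geomOfConcurrence (c : ℝ) : ℝ := (1 - √(1 - c ^ 2)) / 2

lemma concaveOn_sqrt_one_sub_sq : ConcaveOn ℝ (Icc (-1) 1) fun c : ℝ => √(1 - c ^ 2) := by
  have hf : Continuous fun c : ℝ => 1 - c ^ 2 := by fun_prop
  have hconc : ConcaveOn ℝ (Icc (-1) 1) fun c : ℝ => 1 - c ^ 2 :=
    (concaveOn_const 1 (convex_Icc _ _)).sub
      ((Even.convexOn_pow even_two).subset (subset_univ _) (convex_Icc _ _))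
  have himage : (fun c : ℝ => 1 - c ^ 2) '' Icc (-1) 1 ⊆ Ici 0 := by
    rintro _ ⟨c, ⟨h0, h1⟩, rfl⟩
    simp only [mem_Ici]
    nlinarith
  exact (Real.strictConcaveOn_sqrt.concaveOn.subset himage
    (isPreconnected_Icc.image _ hf.continuousOn).convex).comp hconc
    (Real.sqrt_monotone.monotoneOn _)

lemma convexOn_geomOfConcurrence : ConvexOn ℝ (Icc (-1) 1) geomOfConcurrence :=
  (((convexOn_const 1 (convex_Icc _ _)).sub concaveOn_sqrt_one_sub_sq).smul
    (by norm_num : (0 : ℝ) ≤ 1 / 2)).congr fun c _ => by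
      simp only [geomOfConcurrence, Pi.sub_apply, smul_eq_mul]
      ring

lemma geomOfConcurrence_nonneg (c : ℝ) : 0 ≤ geomOfConcurrence c := by
  have : √(1 - c ^ 2) ≤ 1 := Real.sqrt_le_one.mpr (by nlinarith)
  unfold geomOfConcurrence
  linarith

lemma geomOfConcurrence_le_half (c : ℝ) : geomOfConcurrence c ≤ 1 / 2 := by
  have := Real.sqrt_nonneg (1 - c ^ 2)
  unfold geomOfConcurrence
  linarith

lemma geomOfConcurrence_le_half_mul {c : ℝ} (hc : 0 ≤ c) : geomOfConcurrence c ≤ c / 2 := by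
  suffices 1 - c ≤ √(1 - c ^ 2) by unfold geomOfConcurrence; linarith
  rcases le_or_gt c 1 with h | h
  · exact (Real.le_sqrt (by linarith) (by nlinarith)).mpr (by nlinarith)
  · linarith [Real.sqrt_nonneg (1 - c ^ 2)]

lemma continuous_geomOfConcurrence : Continuous geomOfConcurrence := by
  unfold geomOfConcurrence
  fun_prop

lemma le_of_sq_le_four_mul_mul_one_sub {x c : ℝ} (h : c ^ 2 ≤ 4 * x * (1 - x)) :
    x ≤ (1 + √(1 - c ^ 2)) / 2 := by
  have : |2 * x - 1| ≤ √(1 - c ^ 2) := Real.abs_le_sqrt (by nlinarith)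
  linarith [le_abs_self (2 * x - 1)]

/-- The hypothesis `h0` covers `s = ∅`, where `sSup s = 0`. -/
lemma Continuous.map_sSup_le {f : ℝ → ℝ} (hf : Continuous f) {s : Set ℝ} (hs : BddAbove s)
    {b : ℝ} (h0 : f 0 ≤ b) (hb : ∀ x ∈ s, f x ≤ b) : f (sSup s) ≤ b := by
  rcases s.eq_empty_or_nonempty with rfl | hne
  · rwa [Real.sSup_empty]
  · exact closure_minimal hb (isClosed_le hf continuous_const) (csSup_mem_closure hne hs)

section UnitVectors

variable {ι : Type*} [Fintype ι]

lemma ofReal_sum_sq_norm (v : ι → ℂ) :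
    ((∑ i, ‖v i‖ ^ 2 : ℝ) : ℂ) = star v ⬝ᵥ v := by
  push_cast
  simp [dotProduct, Complex.conj_mul']

lemma sum_sq_norm_smul (c : ℂ) (v : ι → ℂ) :
    ∑ i, ‖(c • v) i‖ ^ 2 = ‖c‖ ^ 2 * ∑ i, ‖v i‖ ^ 2 := by
  simp [mul_pow, Finset.mul_sum]

lemma exists_sq_norm_mul_sum_sq_norm_eq_one {v : ι → ℂ} (hv : v ≠ 0) :
    ∃ c : ℂ, ‖c‖ ^ 2 * ∑ i, ‖v i‖ ^ 2 = 1 := by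
  have hs : 0 < ∑ i, ‖v i‖ ^ 2 := by
    have : WithLp.toLp 2 v ≠ 0 := by simpa using hv
    rw [← EuclideanSpace.norm_sq_eq]
    positivity
  refine ⟨((√(∑ i, ‖v i‖ ^ 2))⁻¹ : ℝ), ?_⟩
  rw [Complex.norm_real, Real.norm_eq_abs, sq_abs, inv_pow, Real.sq_sqrt hs.le,
    inv_mul_cancel₀ hs.ne']

lemma sq_norm_star_dotProduct_le (α w : ι → ℂ) :
    ‖star α ⬝ᵥ w‖ ^ 2 ≤ (∑ i, ‖α i‖ ^ 2) * ∑ i, ‖w i‖ ^ 2 := by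
  rw [← EuclideanSpace.norm_sq_eq, ← EuclideanSpace.norm_sq_eq, ← mul_pow, dotProduct_comm,
    ← EuclideanSpace.inner_toLp_toLp]
  exact pow_le_pow_left₀ (norm_nonneg _) (norm_inner_le_norm _ _) 2

lemma exists_sq_norm_star_dotProduct_eq {w : ι → ℂ} (hw : w ≠ 0) :
    ∃ α : ι → ℂ, ∑ i, ‖α i‖ ^ 2 = 1 ∧ ‖star α ⬝ᵥ w‖ ^ 2 = ∑ i, ‖w i‖ ^ 2 := by
  obtain ⟨c, hc⟩ := exists_sq_norm_mul_sum_sq_norm_eq_one hw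
  refine ⟨c • w, by rw [sum_sq_norm_smul, hc], ?_⟩
  rw [star_smul, smul_dotProduct, ← ofReal_sum_sq_norm, smul_eq_mul, norm_mul,
    Complex.norm_real, Real.norm_of_nonneg (by positivity), mul_pow, norm_star]
  linear_combination (∑ i, ‖w i‖ ^ 2) * hc

lemma star_dotProduct_self_eq_one {v : ι → ℂ} (hv : ∑ i, ‖v i‖ ^ 2 = 1) : star v ⬝ᵥ v = 1 := by
  rw [← ofReal_sum_sq_norm, hv, Complex.ofReal_one]

end UnitVectors

def coeffMatrix {d : ℕ} (ψ : Fin d × Fin d → ℂ) : Matrix (Fin d) (Fin d) ℂ :=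
  Matrix.of fun i j => ψ (i, j)

lemma overlap_eq_star_dotProduct {d : ℕ} (ψ : Fin d × Fin d → ℂ) (α β : Fin d → ℂ) :
    ∑ p : Fin d × Fin d, star (α p.1 * β p.2) * ψ p = star α ⬝ᵥ (coeffMatrix ψ *ᵥ star β) := by
  simp only [Fintype.sum_prod_type, dotProduct, Matrix.mulVec, coeffMatrix, Matrix.of_apply,
    Finset.mul_sum, star_mul, Pi.star_apply]
  refine Finset.sum_congr rfl fun i _ => Finset.sum_congr rfl fun j _ => ?_
  ring

lemma sum_fin_two_prod {M : Type*} [AddCommMonoid M] (f : Fin 2 × Fin 2 → M) :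
    ∑ p, f p = f (0, 0) + f (0, 1) + f (1, 0) + f (1, 1) := by
  simp [Fintype.sum_prod_type, Fin.sum_univ_two, add_assoc]

lemma concurrence_eq (ψ : Fin 2 × Fin 2 → ℂ) :
    concurrence ψ = 2 * ‖ψ (0, 0) * ψ (1, 1) - ψ (0, 1) * ψ (1, 0)‖ := by
  have h : ∑ p, star (psiTilde ψ p) * ψ p = -2 * (ψ (0, 0) * ψ (1, 1) - ψ (0, 1) * ψ (1, 0)) := by
    simp only [sum_fin_two_prod, psiTilde, sigmaY, Fin.sum_univ_two, Matrix.of_apply,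
      Matrix.cons_val', Matrix.cons_val_fin_one, Matrix.cons_val_zero, Matrix.cons_val_one,
      RCLike.star_def, map_add, map_mul, map_neg, map_zero, Complex.conj_conj, Complex.conj_I]
    linear_combination 2 * (ψ (0, 0) * ψ (1, 1) - ψ (0, 1) * ψ (1, 0)) * Complex.I_sq
  rw [concurrence, h, norm_mul]
  norm_num

lemma sq_norm_mul_add_mul_le (a b c d : ℂ) :
    ‖a * b + c * d‖ ^ 2 ≤ (‖a‖ ^ 2 + ‖c‖ ^ 2) * (‖b‖ ^ 2 + ‖d‖ ^ 2) := by
  have h : ‖a * b + c * d‖ ≤ ‖a‖ * ‖b‖ + ‖c‖ * ‖d‖ := (norm_add_le _ _).trans_eq (by simp)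
  nlinarith [norm_nonneg (a * b + c * d), sq_nonneg (‖a‖ * ‖d‖ - ‖c‖ * ‖b‖)]

lemma concurrence_nonneg (ψ : Fin 2 × Fin 2 → ℂ) : 0 ≤ concurrence ψ := norm_nonneg _

lemma concurrence_le_one {ψ : Fin 2 × Fin 2 → ℂ} (hψ : ∑ q, ‖ψ q‖ ^ 2 = 1) :
    concurrence ψ ≤ 1 := by
  rw [sum_fin_two_prod] at hψ
  have h : ‖ψ (0, 0) * ψ (1, 1) - ψ (0, 1) * ψ (1, 0)‖ ≤
      ‖ψ (0, 0)‖ * ‖ψ (1, 1)‖ + ‖ψ (0, 1)‖ * ‖ψ (1, 0)‖ :=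
    (norm_sub_le _ _).trans_eq (by rw [norm_mul, norm_mul])
  rw [concurrence_eq]
  nlinarith [sq_nonneg (‖ψ (0, 0)‖ - ‖ψ (1, 1)‖), sq_nonneg (‖ψ (0, 1)‖ - ‖ψ (1, 0)‖)]

lemma sum_sq_norm_mulVec_le {ψ : Fin 2 × Fin 2 → ℂ} (hψ : ∑ q, ‖ψ q‖ ^ 2 = 1)
    {γ : Fin 2 → ℂ} (hγ : ∑ i, ‖γ i‖ ^ 2 = 1) :
    ∑ i, ‖(coeffMatrix ψ *ᵥ γ) i‖ ^ 2 ≤ (1 + √(1 - concurrence ψ ^ 2)) / 2 := by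
  -- `γ` and `γ⊥ = (-γ̄₁, γ̄₀)` form an orthonormal basis, so `‖Mγ‖² + ‖Mγ⊥‖² = ‖M‖² = 1` and
  -- `det [Mγ Mγ⊥] = det M`; Hadamard's inequality then gives `|det M|² ≤ x (1 - x)`, `x = ‖Mγ‖²`.
  set u := coeffMatrix ψ *ᵥ γ
  set v := coeffMatrix ψ *ᵥ ![-conj (γ 1), conj (γ 0)]
  have hψ' := star_dotProduct_self_eq_one hψ
  have hγ' := star_dotProduct_self_eq_one hγ
  simp only [dotProduct, sum_fin_two_prod, Fin.sum_univ_two, Pi.star_apply, Complex.star_def]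
    at hψ' hγ'
  have hsum : ∑ i, ‖u i‖ ^ 2 + ∑ i, ‖v i‖ ^ 2 = 1 := by
    apply Complex.ofReal_injective
    rw [Complex.ofReal_add, ofReal_sum_sq_norm, ofReal_sum_sq_norm]
    simp only [dotProduct, Pi.star_apply, Complex.star_def, Fin.sum_univ_two]
    simp only [u, v, coeffMatrix, Matrix.mulVec_fin_two, Matrix.of_apply, Matrix.cons_val_zero,
      Matrix.cons_val_one, Matrix.cons_val_fin_one, map_add, map_mul, map_neg, mul_neg,
      Complex.conj_conj, Complex.ofReal_one]
    linear_combination (conj (ψ (0, 0)) * ψ (0, 0) + conj (ψ (0, 1)) * ψ (0, 1) +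
      conj (ψ (1, 0)) * ψ (1, 0) + conj (ψ (1, 1)) * ψ (1, 1)) * hγ' + hψ'
  have hdet : u 0 * v 1 + u 1 * -v 0 = ψ (0, 0) * ψ (1, 1) - ψ (0, 1) * ψ (1, 0) := by
    simp only [u, v, coeffMatrix, Matrix.mulVec_fin_two, Matrix.of_apply, Matrix.cons_val_zero,
      Matrix.cons_val_one, Matrix.cons_val_fin_one, mul_neg]
    linear_combination (ψ (0, 0) * ψ (1, 1) - ψ (0, 1) * ψ (1, 0)) * hγ'
  apply le_of_sq_le_four_mul_mul_one_sub
  have := sq_norm_mul_add_mul_le (u 0) (v 1) (u 1) (-v 0)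
  rw [norm_neg] at this
  rw [concurrence_eq, mul_pow, ← hdet]
  simp only [Fin.sum_univ_two] at hsum ⊢
  nlinarith

lemma exists_sum_sq_norm_mulVec_eq {ψ : Fin 2 × Fin 2 → ℂ} (hψ : ∑ q, ‖ψ q‖ ^ 2 = 1) :
    ∃ γ : Fin 2 → ℂ, ∑ i, ‖γ i‖ ^ 2 = 1 ∧
      ∑ i, ‖(coeffMatrix ψ *ᵥ γ) i‖ ^ 2 = (1 + √(1 - concurrence ψ ^ 2)) / 2 := by
  set lam := (1 + √(1 - concurrence ψ ^ 2)) / 2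
  set D := ψ (0, 0) * ψ (1, 1) - ψ (0, 1) * ψ (1, 0)
  have hlam : lam ^ 2 - lam + ‖D‖ ^ 2 = 0 := by
    have hC : concurrence ψ = 2 * ‖D‖ := concurrence_eq ψ
    have hs := Real.sq_sqrt (show 0 ≤ 1 - concurrence ψ ^ 2 by
      nlinarith [concurrence_le_one hψ, concurrence_nonneg ψ])
    simp only [lam]
    rw [hC] at hs ⊢
    linear_combination hs / 4
  have hψ' := star_dotProduct_self_eq_one hψ
  simp only [dotProduct, sum_fin_two_prod, Pi.star_apply, Complex.star_def] at hψ'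
  -- `det (Mᴴ M - λ) = λ² - λ ‖M‖² + |det M|²`, so `λ` is an eigenvalue of `Mᴴ M`.
  have hdet : ((coeffMatrix ψ)ᴴ * coeffMatrix ψ - (lam : ℂ) • 1).det = 0 := by
    have hlam' : (lam : ℂ) ^ 2 - lam + conj D * D = 0 := by
      rw [Complex.conj_mul']
      exact_mod_cast hlam
    simp only [D, map_sub, map_mul] at hlam'
    rw [Matrix.det_fin_two]
    simp only [coeffMatrix, Matrix.sub_apply, Matrix.mul_apply, Matrix.conjTranspose_apply,
      Matrix.of_apply, RCLike.star_def, Fin.sum_univ_two, Matrix.smul_apply, Matrix.one_apply_eq,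
      Matrix.one_apply_ne zero_ne_one, Matrix.one_apply_ne one_ne_zero, smul_zero, sub_zero]
    linear_combination hlam' - lam * hψ'
  obtain ⟨v, hv0, hv⟩ := Matrix.exists_mulVec_eq_zero_iff.mpr hdet
  have hMv : ∑ i, ‖(coeffMatrix ψ *ᵥ v) i‖ ^ 2 = lam * ∑ i, ‖v i‖ ^ 2 := by
    have e0 := congrFun hv 0
    have e1 := congrFun hv 1
    simp only [Matrix.mulVec, dotProduct, coeffMatrix, Matrix.sub_apply, Matrix.mul_apply,
      Matrix.conjTranspose_apply, Matrix.of_apply, RCLike.star_def, Fin.sum_univ_two,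
      Matrix.smul_apply, Matrix.one_apply_eq, Matrix.one_apply_ne zero_ne_one,
      Matrix.one_apply_ne one_ne_zero, Pi.zero_apply] at e0 e1
    apply Complex.ofReal_injective
    rw [Complex.ofReal_mul, ofReal_sum_sq_norm, ofReal_sum_sq_norm]
    simp only [Matrix.mulVec, dotProduct, Pi.star_apply, Complex.star_def, coeffMatrix,
      Matrix.of_apply, Fin.sum_univ_two, map_add, map_mul]
    linear_combination conj (v 0) * e0 + conj (v 1) * e1
  obtain ⟨c, hc⟩ := exists_sq_norm_mul_sum_sq_norm_eq_one hv0
  refine ⟨c • v, by rw [sum_sq_norm_smul, hc], ?_⟩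
  rw [Matrix.mulVec_smul, sum_sq_norm_smul, hMv, mul_left_comm, hc, mul_one]

lemma maxOverlap_two_eq {ψ : Fin 2 × Fin 2 → ℂ} (hψ : ∑ q, ‖ψ q‖ ^ 2 = 1) :
    maxOverlap 2 ψ = (1 + √(1 - concurrence ψ ^ 2)) / 2 := by
  refine IsGreatest.csSup_eq ⟨?_, ?_⟩
  · obtain ⟨γ, hγ, hMγ⟩ := exists_sum_sq_norm_mulVec_eq hψ
    have hMγ0 : coeffMatrix ψ *ᵥ γ ≠ 0 := by
      rintro h
      have : (0 : ℝ) < (1 + √(1 - concurrence ψ ^ 2)) / 2 := by positivity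
      simp [h, ← hMγ] at this
    obtain ⟨α, hα, hαγ⟩ := exists_sq_norm_star_dotProduct_eq hMγ0
    refine ⟨α, star γ, hα, by simpa using hγ, ?_⟩
    rw [overlap_eq_star_dotProduct, star_star, hαγ, hMγ]
  · rintro _ ⟨α, β, hα, hβ, rfl⟩
    rw [overlap_eq_star_dotProduct]
    calc _ ≤ (∑ i, ‖α i‖ ^ 2) * ∑ i, ‖(coeffMatrix ψ *ᵥ star β) i‖ ^ 2 :=
          sq_norm_star_dotProduct_le _ _
      _ ≤ _ := by
          rw [hα, one_mul]
          exact sum_sq_norm_mulVec_le hψ (by simpa using hβ)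

lemma geomMeasure_eq {ψ : Fin 2 × Fin 2 → ℂ} (hψ : ∑ q, ‖ψ q‖ ^ 2 = 1) :
    geomMeasure ψ = geomOfConcurrence (concurrence ψ) := by
  rw [geomMeasure, maxOverlap_two_eq hψ, geomOfConcurrence]
  ring

/-- `concCap ρ` and `geomCap ρ` are, by definition, the suprema of
`ensembleAverages ρ concurrence` and `ensembleAverages ρ geomMeasure`. -/
def ensembleAverages (ρ : Matrix (Fin 2 × Fin 2) (Fin 2 × Fin 2) ℂ)
    (f : (Fin 2 × Fin 2 → ℂ) → ℝ) : Set ℝ :=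
  {c | ∃ (n : ℕ) (p : Fin n → ℝ) (ψ : Fin n → (Fin 2 × Fin 2 → ℂ)),
    IsEnsemble ρ p ψ ∧ c = ∑ i, p i * f (ψ i)}

section Ensembles

variable {ρ : Matrix (Fin 2 × Fin 2) (Fin 2 × Fin 2) ℂ} {n : ℕ} {p : Fin n → ℝ}
  {ψ : Fin n → (Fin 2 × Fin 2 → ℂ)}

lemma IsEnsemble.sum_weights_eq_one (hE : IsEnsemble ρ p ψ) (htr : ρ.trace = 1) :
    ∑ i, p i = 1 := by
  apply Complex.ofReal_injective
  calc ((∑ i, p i : ℝ) : ℂ) = ∑ i, (p i : ℂ) * ((∑ q, ‖ψ i q‖ ^ 2 : ℝ) : ℂ) := by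
        simp only [Complex.ofReal_sum, hE.2.1, Complex.ofReal_one, mul_one]
    _ = ∑ q, ∑ i, (p i : ℂ) * (ψ i q * star (ψ i q)) := by
        simp only [ofReal_sum_sq_norm, dotProduct, Pi.star_apply, Finset.mul_sum, mul_comm (star _)]
        exact Finset.sum_comm
    _ = ρ.trace := Finset.sum_congr rfl fun q _ => (hE.2.2 q q).symm
    _ = 1 := htr

lemma IsEnsemble.sum_mul_le_one (hE : IsEnsemble ρ p ψ) (htr : ρ.trace = 1)
    {f : Fin n → ℝ} (hf : ∀ i, f i ≤ 1) : ∑ i, p i * f i ≤ 1 :=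
  calc ∑ i, p i * f i ≤ ∑ i, p i :=
        Finset.sum_le_sum fun i _ => mul_le_of_le_one_right (hE.1 i) (hf i)
    _ = 1 := hE.sum_weights_eq_one htr

variable {f : (Fin 2 × Fin 2 → ℂ) → ℝ}

lemma bddAbove_ensembleAverages (htr : ρ.trace = 1)
    (hf : ∀ ψ, ∑ q, ‖ψ q‖ ^ 2 = 1 → f ψ ≤ 1) : BddAbove (ensembleAverages ρ f) := by
  refine ⟨1, ?_⟩
  rintro _ ⟨n, p, ψ, hE, rfl⟩
  exact hE.sum_mul_le_one htr fun i => hf _ (hE.2.1 i)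

lemma sSup_ensembleAverages_nonneg (hf : ∀ ψ, ∑ q, ‖ψ q‖ ^ 2 = 1 → 0 ≤ f ψ) :
    0 ≤ sSup (ensembleAverages ρ f) := by
  refine Real.sSup_nonneg ?_
  rintro _ ⟨n, p, ψ, hE, rfl⟩
  exact Finset.sum_nonneg fun i _ => mul_nonneg (hE.1 i) (hf _ (hE.2.1 i))

lemma IsEnsemble.sum_mul_concurrence_le_concCap (hE : IsEnsemble ρ p ψ) (htr : ρ.trace = 1) :
    ∑ i, p i * concurrence (ψ i) ≤ concCap ρ :=
  le_csSup (bddAbove_ensembleAverages htr fun _ => concurrence_le_one) ⟨n, p, ψ, hE, rfl⟩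

lemma IsEnsemble.sum_mul_geomMeasure_le_geomCap (hE : IsEnsemble ρ p ψ) (htr : ρ.trace = 1) :
    ∑ i, p i * geomMeasure (ψ i) ≤ geomCap ρ :=
  le_csSup (bddAbove_ensembleAverages htr fun φ hφ => by
    rw [geomMeasure_eq hφ]; linarith [geomOfConcurrence_le_half (concurrence φ)])
    ⟨n, p, ψ, hE, rfl⟩

lemma geomCap_le_half_concCap (htr : ρ.trace = 1) : geomCap ρ ≤ concCap ρ / 2 := by
  have hC : 0 ≤ concCap ρ := sSup_ensembleAverages_nonneg fun ψ _ => concurrence_nonneg ψ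
  refine Real.sSup_le ?_ (by positivity)
  rintro _ ⟨n, p, ψ, hE, rfl⟩
  calc ∑ i, p i * geomMeasure (ψ i) ≤ ∑ i, p i * (concurrence (ψ i) / 2) := by
        refine Finset.sum_le_sum fun i _ => mul_le_mul_of_nonneg_left ?_ (hE.1 i)
        rw [geomMeasure_eq (hE.2.1 i)]
        exact geomOfConcurrence_le_half_mul (concurrence_nonneg _)
    _ = (∑ i, p i * concurrence (ψ i)) / 2 := by simp only [Finset.sum_div, mul_div_assoc]
    _ ≤ concCap ρ / 2 := by gcongr; exact hE.sum_mul_concurrence_le_concCap htr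

lemma geomOfConcurrence_concCap_le (htr : ρ.trace = 1) :
    geomOfConcurrence (concCap ρ) ≤ geomCap ρ := by
  have hG : 0 ≤ geomCap ρ := sSup_ensembleAverages_nonneg fun ψ hψ => by
    rw [geomMeasure_eq hψ]; exact geomOfConcurrence_nonneg _
  refine continuous_geomOfConcurrence.map_sSup_le
    (bddAbove_ensembleAverages htr fun _ => concurrence_le_one) (by simpa [geomOfConcurrence]) ?_
  rintro _ ⟨n, p, ψ, hE, rfl⟩
  calc geomOfConcurrence (∑ i, p i * concurrence (ψ i))
      ≤ ∑ i, p i * geomOfConcurrence (concurrence (ψ i)) :=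
        convexOn_geomOfConcurrence.map_sum_le (fun i _ => hE.1 i) (hE.sum_weights_eq_one htr)
          fun i _ => ⟨by linarith [concurrence_nonneg (ψ i)], concurrence_le_one (hE.2.1 i)⟩
    _ = ∑ i, p i * geomMeasure (ψ i) := by simp only [geomMeasure_eq (hE.2.1 _)]
    _ ≤ geomCap ρ := hE.sum_mul_geomMeasure_le_geomCap htr

end Ensembles

theorem geomCap_bounds_of_concCap_general
    (ρ : Matrix (Fin 2 × Fin 2) (Fin 2 × Fin 2) ℂ)
    (htr : ρ.trace = 1) :
    (1 - Real.sqrt (1 - concCap ρ ^ 2)) / 2 ≤ geomCap ρ ∧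
    geomCap ρ ≤ concCap ρ / 2 :=
  ⟨geomOfConcurrence_concCap_le htr, geomCap_le_half_concCap htr⟩

/-- For any two-qubit state `ρ`,
`(1 - √(1 - C^∩(ρ)²))/2 ≤ E_G^∩(ρ) ≤ C^∩(ρ)/2`. -/
theorem geomCap_bounds_of_concCap
    (ρ : Matrix (Fin 2 × Fin 2) (Fin 2 × Fin 2) ℂ)
    (hρ : ρ.PosSemidef) (htr : ρ.trace = 1) :
    (1 - Real.sqrt (1 - concCap ρ ^ 2)) / 2 ≤ geomCap ρ ∧
    geomCap ρ ≤ concCap ρ / 2 :=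
  geomCap_bounds_of_concCap_general ρ htr
end

section
/- Let a = √ε |0⟩⟨1| and b = |0⟩⟨0| + √(1−ε)|1⟩⟨1| for ε ∈ [0,1] (Kraus operators of the qubit amplitude-damping channel). Then a†a + b†b = I, and ‖a‖_∞² + ‖b‖_∞² = 1 + ε = ‖a a† + b b†‖_∞. Hence this Kraus decomposition achieves the minimal value of ∑_i ‖A_i‖_∞² over all Kraus decompositions of the channel, namely σ(Λ) = 1 + ε, so the optimal success probability is 1/(1+ε). -/
open scoped Matrix.Norms.L2Operator
open Matrix

/-!
For any Kraus family with `∑ i, B i * ρ * (B i)ᴴ = Λ ρ`, taking `ρ = 1` gives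
`Λ 1 = ∑ i, B i * (B i)ᴴ`; the triangle inequality and the C⋆-identity `‖B Bᴴ‖ = ‖B‖²` then give
`‖Λ 1‖ ≤ ∑ i, ‖B i‖²`. For amplitude damping `a aᴴ = diag(ε, 0)` and `b bᴴ = diag(1, 1 - ε)`, so
`‖Λ 1‖ = 1 + ε`, while `‖a‖² = ε` and `‖b‖² = 1` show that the bound is attained.
-/

lemma norm_vecCons_two {E : Type*} [SeminormedAddGroup E] (x y : E) :
    ‖![x, y]‖ = max ‖x‖ ‖y‖ := by
  simp [Pi.norm_def, Fin.univ_succ, NNReal.coe_max]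

namespace Matrix

variable {𝕜 m n ι : Type*} [RCLike 𝕜] [Fintype m] [Fintype n] [DecidableEq m] [DecidableEq n]

lemma l2_opNorm_mul_conjTranspose_self (A : Matrix m n 𝕜) : ‖A * Aᴴ‖ = ‖A‖ * ‖A‖ := by
  simpa only [conjTranspose_conjTranspose, l2_opNorm_conjTranspose] using
    l2_opNorm_conjTranspose_mul_self Aᴴ

lemma l2_opNorm_map_one_le_sum_sq {Φ : Matrix n n 𝕜 → Matrix m m 𝕜} (s : Finset ι)
    (B : ι → Matrix m n 𝕜) (hB : ∀ ρ, ∑ i ∈ s, B i * ρ * (B i)ᴴ = Φ ρ) :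
    ‖Φ 1‖ ≤ ∑ i ∈ s, ‖B i‖ ^ 2 :=
  calc ‖Φ 1‖ = ‖∑ i ∈ s, B i * (B i)ᴴ‖ := by simp only [← hB, Matrix.mul_one]
    _ ≤ ∑ i ∈ s, ‖B i * (B i)ᴴ‖ := norm_sum_le _ _
    _ = ∑ i ∈ s, ‖B i‖ ^ 2 := by simp only [l2_opNorm_mul_conjTranspose_self, sq]

end Matrix

namespace AmplitudeDamping

noncomputable def krausA (ε : ℝ) : Matrix (Fin 2) (Fin 2) ℂ := !![0, (Real.sqrt ε : ℂ); 0, 0]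

noncomputable def krausB (ε : ℝ) : Matrix (Fin 2) (Fin 2) ℂ :=
  !![1, 0; 0, (Real.sqrt (1 - ε) : ℂ)]

variable {ε : ℝ}

lemma krausA_conjTranspose_mul_self (hε : 0 ≤ ε) :
    (krausA ε)ᴴ * krausA ε = diagonal ![0, (ε : ℂ)] := by
  ext i j
  fin_cases i <;> fin_cases j <;>
    simp [krausA, mul_apply, ← Complex.ofReal_mul, Real.mul_self_sqrt hε]

lemma krausA_mul_conjTranspose_self (hε : 0 ≤ ε) :
    krausA ε * (krausA ε)ᴴ = diagonal ![(ε : ℂ), 0] := by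
  ext i j
  fin_cases i <;> fin_cases j <;>
    simp [krausA, mul_apply, ← Complex.ofReal_mul, Real.mul_self_sqrt hε]

lemma krausB_eq_diagonal : krausB ε = diagonal ![1, (Real.sqrt (1 - ε) : ℂ)] :=
  (diagonal_vec2 _ _).symm

lemma krausB_conjTranspose : (krausB ε)ᴴ = krausB ε := by
  rw [krausB_eq_diagonal, diagonal_conjTranspose]
  congr 1
  ext i
  fin_cases i <;> simp

lemma krausB_mul_self (hε : ε ≤ 1) : krausB ε * krausB ε = diagonal ![1, ((1 - ε : ℝ) : ℂ)] := by
  rw [krausB_eq_diagonal, diagonal_mul_diagonal]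
  congr 1
  ext i
  fin_cases i <;> simp [← Complex.ofReal_mul, Real.mul_self_sqrt (sub_nonneg.2 hε)]

lemma norm_krausA_sq (hε : 0 ≤ ε) : ‖krausA ε‖ ^ 2 = ε := by
  rw [sq, ← l2_opNorm_conjTranspose_mul_self, krausA_conjTranspose_mul_self hε,
    l2_opNorm_diagonal, norm_vecCons_two]
  simp [hε]

lemma norm_krausB (hε : 0 ≤ ε) : ‖krausB ε‖ = 1 := by
  rw [krausB_eq_diagonal, l2_opNorm_diagonal, norm_vecCons_two]
  simp [Real.sqrt_le_one.mpr (by linarith : 1 - ε ≤ 1), abs_of_nonneg (Real.sqrt_nonneg _)]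

lemma norm_krausA_sq_add_norm_krausB_sq (hε : 0 ≤ ε) :
    ‖krausA ε‖ ^ 2 + ‖krausB ε‖ ^ 2 = 1 + ε := by
  rw [norm_krausA_sq hε, norm_krausB hε, one_pow, add_comm]

lemma conjTranspose_mul_self_add_eq_one (hε0 : 0 ≤ ε) (hε1 : ε ≤ 1) :
    (krausA ε)ᴴ * krausA ε + (krausB ε)ᴴ * krausB ε = 1 := by
  rw [krausA_conjTranspose_mul_self hε0, krausB_conjTranspose, krausB_mul_self hε1, diagonal_add,
    ← diagonal_one]
  congr 1
  ext i
  fin_cases i <;> simp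

lemma norm_mul_conjTranspose_self_add (hε0 : 0 ≤ ε) (hε1 : ε ≤ 1) :
    ‖krausA ε * (krausA ε)ᴴ + krausB ε * (krausB ε)ᴴ‖ = 1 + ε := by
  have hsum : diagonal ![(ε : ℂ), 0] + diagonal ![1, ((1 - ε : ℝ) : ℂ)] =
      diagonal ![((1 + ε : ℝ) : ℂ), ((1 - ε : ℝ) : ℂ)] := by
    rw [diagonal_add]
    congr 1
    ext i
    fin_cases i <;> simp [add_comm]
  rw [krausA_mul_conjTranspose_self hε0, krausB_conjTranspose, krausB_mul_self hε1, hsum,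
    l2_opNorm_diagonal, norm_vecCons_two, Complex.norm_real, Complex.norm_real,
    Real.norm_of_nonneg (by linarith), Real.norm_of_nonneg (by linarith)]
  exact max_eq_left (by linarith)

end AmplitudeDamping

open AmplitudeDamping in
/-- The Kraus operators `a = √ε |0⟩⟨1|` and `b = |0⟩⟨0| + √(1-ε)|1⟩⟨1|` of the qubit
amplitude-damping channel form a Kraus decomposition, satisfy
`‖a‖² + ‖b‖² = 1 + ε = ‖a aᴴ + b bᴴ‖`, and achieve the minimum of `∑ i ‖B i‖²` over all
Kraus decompositions `{B i}` of the channel. -/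
theorem amplitude_damping_optimal (ε : ℝ) (hε0 : 0 ≤ ε) (hε1 : ε ≤ 1) :
    letI a : Matrix (Fin 2) (Fin 2) ℂ := !![0, (Real.sqrt ε : ℂ); 0, 0]
    letI b : Matrix (Fin 2) (Fin 2) ℂ := !![1, 0; 0, (Real.sqrt (1 - ε) : ℂ)]
    aᴴ * a + bᴴ * b = 1 ∧
    ‖a‖ ^ 2 + ‖b‖ ^ 2 = 1 + ε ∧
    ‖a * aᴴ + b * bᴴ‖ = 1 + ε ∧
    ∀ (n : ℕ) (B : Fin n → Matrix (Fin 2) (Fin 2) ℂ),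
      (∑ i, (B i)ᴴ * B i = 1) →
      (∀ ρ : Matrix (Fin 2) (Fin 2) ℂ,
        ∑ i, B i * ρ * (B i)ᴴ = a * ρ * aᴴ + b * ρ * bᴴ) →
      1 + ε ≤ ∑ i, ‖B i‖ ^ 2 := by
  refine ⟨conjTranspose_mul_self_add_eq_one hε0 hε1, norm_krausA_sq_add_norm_krausB_sq hε0,
    norm_mul_conjTranspose_self_add hε0 hε1, fun n B _ hB => ?_⟩
  calc 1 + ε = ‖krausA ε * (krausA ε)ᴴ + krausB ε * (krausB ε)ᴴ‖ :=
        (norm_mul_conjTranspose_self_add hε0 hε1).symm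
    _ ≤ ∑ i, ‖B i‖ ^ 2 := by
      simpa only [Matrix.mul_one] using l2_opNorm_map_one_le_sum_sq
        (Φ := fun ρ ↦ krausA ε * ρ * (krausA ε)ᴴ + krausB ε * ρ * (krausB ε)ᴴ) Finset.univ B hB
end
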